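/- Let P_n be symmetric probability measures on {0,1}^n and P a probability measure on {0,1}. Suppose that for every fixed k and every (j_1,...,j_k) ∈ {0,1}^k, the marginal P_n^{(k)}(j_1,...,j_k) → P(j_1)···P(j_k) as n → ∞. Then the distribution under P_n of the empirical frequency N(x)/n (where N(x) = #{i : x_i = 1}) converges weakly to the point mass at P(1); equivalently, for all continuous G : [0,1] → ℝ, E_{P_n}[G(N/n)] → G(P(1)). -/

import Mathlib

/-!
By exchangeability, the first two moments of the number `N` of ones are governed by the one- and
two-site marginals: `E N = n P⁽¹⁾(1)` and `E N² = n (n - 1) P⁽²⁾(1, 1) + n P⁽¹⁾(1)`. Chaoticity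
sends these marginals to `a` and `a²`, where `a = P(1)`, so the variance of `N / n` about `a`
tends to `0`. A function `G` continuous on `[0, 1]` satisfies `|G t - G a| ≤ ε + c (t - a)²` for
some `c`, and averaging this bound against `P_n` gives the claim (Chebyshev's argument).
-/

open Finset Filter Topology

/-- The number of coordinates of `x : {0,1}^n` equal to `1` (i.e. `true`). -/
def countOnes {n : ℕ} (x : Fin n → Bool) : ℕ := ∑ i, if x i then 1 else 0

theorem exists_abs_sub_le_add_mul_sq {K : Set ℝ} (hK : IsCompact K) {G : ℝ → ℝ}
    (hG : ContinuousOn G K) {a : ℝ} (ha : a ∈ K) {ε : ℝ} (hε : 0 < ε) :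
    ∃ c, ∀ t ∈ K, |G t - G a| ≤ ε + c * (t - a) ^ 2 := by
  obtain ⟨C, hC⟩ := hK.exists_bound_of_continuousOn hG
  obtain ⟨δ, hδ, hGδ⟩ := Metric.continuousWithinAt_iff.mp (hG a ha) ε hε
  have hC0 : 0 ≤ C := (norm_nonneg _).trans (hC a ha)
  refine ⟨2 * C / δ ^ 2, fun t ht => ?_⟩
  by_cases hta : |t - a| < δ
  · have := hGδ ht hta
    rw [Real.dist_eq] at this
    nlinarith [mul_nonneg (by positivity : 0 ≤ 2 * C / δ ^ 2) (sq_nonneg (t - a))]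
  · have hfar : δ ^ 2 ≤ (t - a) ^ 2 := by
      rw [← sq_abs (t - a)]
      exact pow_le_pow_left₀ hδ.le (not_lt.mp hta) 2
    calc |G t - G a| ≤ |G t| + |G a| := abs_sub _ _
      _ ≤ 2 * C := by linarith [hC t ht, hC a ha, Real.norm_eq_abs (G t), Real.norm_eq_abs (G a)]
      _ = 2 * C / δ ^ 2 * δ ^ 2 := by field_simp
      _ ≤ ε + 2 * C / δ ^ 2 * (t - a) ^ 2 := by
        nlinarith [mul_le_mul_of_nonneg_left hfar (by positivity : 0 ≤ 2 * C / δ ^ 2)]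

theorem abs_sum_mul_sub_le {ι : Type*} [Fintype ι] {w : ι → ℝ} (hw₀ : ∀ x, 0 ≤ w x)
    (hw₁ : ∑ x, w x = 1) {f g : ι → ℝ} {b : ℝ} (hfg : ∀ x, |f x - b| ≤ g x) :
    |∑ x, w x * f x - b| ≤ ∑ x, w x * g x :=
  calc |∑ x, w x * f x - b| = |∑ x, w x * (f x - b)| := by
        simp only [mul_sub, sum_sub_distrib, ← sum_mul, hw₁, one_mul]
    _ ≤ ∑ x, |w x * (f x - b)| := abs_sum_le_sum_abs _ _
    _ ≤ ∑ x, w x * g x := sum_le_sum fun x _ => by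
        rw [abs_mul, abs_of_nonneg (hw₀ x)]
        exact mul_le_mul_of_nonneg_left (hfg x) (hw₀ x)

theorem tendsto_sum_mul_comp_of_tendsto_sum_mul_sub_sq {β : Type*} {l : Filter β}
    {ι : β → Type*} [∀ n, Fintype (ι n)] {w : ∀ n, ι n → ℝ} (hw₀ : ∀ n x, 0 ≤ w n x)
    (hw₁ : ∀ n, ∑ x, w n x = 1) {K : Set ℝ} (hK : IsCompact K) {G : ℝ → ℝ}
    (hG : ContinuousOn G K) {a : ℝ} (ha : a ∈ K) {T : ∀ n, ι n → ℝ} (hT : ∀ n x, T n x ∈ K)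
    (hV : Tendsto (fun n => ∑ x, w n x * (T n x - a) ^ 2) l (𝓝 0)) :
    Tendsto (fun n => ∑ x, w n x * G (T n x)) l (𝓝 (G a)) := by
  rw [Metric.tendsto_nhds]
  intro ε hε
  obtain ⟨c, hGc⟩ := exists_abs_sub_le_add_mul_sq hK hG ha (half_pos hε)
  have hcV : ∀ᶠ n in l, c * ∑ x, w n x * (T n x - a) ^ 2 < ε / 2 :=
    (hV.const_mul c).eventually_lt_const (by simpa using half_pos hε)
  filter_upwards [hcV] with n hn
  calc dist (∑ x, w n x * G (T n x)) (G a)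
      ≤ ∑ x, w n x * (ε / 2 + c * (T n x - a) ^ 2) :=
        abs_sum_mul_sub_le (hw₀ n) (hw₁ n) fun x => hGc _ (hT n x)
    _ = ε / 2 + c * ∑ x, w n x * (T n x - a) ^ 2 := by
        simp only [mul_add, sum_add_distrib, ← sum_mul, hw₁, one_mul, mul_sum, mul_left_comm]
    _ < ε := by linarith

section Exchangeable

variable {α : Type*} [Fintype α] {n : ℕ} {p : (Fin n → α) → ℝ}

theorem sum_mul_comp_perm (hp : ∀ (π : Equiv.Perm (Fin n)) x, p (x ∘ π) = p x)
    (π : Equiv.Perm (Fin n)) (F : (Fin n → α) → ℝ) :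
    ∑ x, p x * F (x ∘ π) = ∑ x, p x * F x := by
  calc ∑ x, p x * F (x ∘ π) = ∑ x, p (x ∘ π) * F (x ∘ π) := by simp only [hp]
    _ = ∑ x, p x * F x :=
      Fintype.sum_equiv (Equiv.arrowCongr π.symm (Equiv.refl α)) _ _ fun _ => rfl

theorem sum_mul_comp_embedding_eq (hp : ∀ (π : Equiv.Perm (Fin n)) x, p (x ∘ π) = p x)
    {ι : Type*} [Finite ι] (F : (ι → α) → ℝ) (e e' : ι ↪ Fin n) :
    ∑ x, p x * F (x ∘ e) = ∑ x, p x * F (x ∘ e') := by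
  obtain ⟨σ, hσ⟩ := Equiv.Perm.exists_extending_pair e e' e.injective e'.injective
  have : ∀ x : Fin n → α, x ∘ e' = (x ∘ σ) ∘ e := fun x => funext fun i => by simp [hσ]
  simp_rw [this]
  exact (sum_mul_comp_perm hp σ (fun y => F (y ∘ e))).symm

theorem sum_mul_apply_eq (hp : ∀ (π : Equiv.Perm (Fin n)) x, p (x ∘ π) = p x)
    (f : α → ℝ) (i j : Fin n) :
    ∑ x, p x * f (x i) = ∑ x, p x * f (x j) :=
  sum_mul_comp_embedding_eq hp (fun y : Unit → α => f (y ()))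
    (Function.Embedding.punit i) (Function.Embedding.punit j)

theorem sum_mul_apply_mul_apply_eq (hp : ∀ (π : Equiv.Perm (Fin n)) x, p (x ∘ π) = p x)
    (f g : α → ℝ) {i j i' j' : Fin n} (hij : i ≠ j) (hij' : i' ≠ j') :
    ∑ x, p x * (f (x i) * g (x j)) = ∑ x, p x * (f (x i') * g (x j')) :=
  sum_mul_comp_embedding_eq hp (fun y => f (y 0) * g (y 1)) (Function.Embedding.embFinTwo hij)
    (Function.Embedding.embFinTwo hij')

theorem sum_mul_sum_apply (hp : ∀ (π : Equiv.Perm (Fin n)) x, p (x ∘ π) = p x)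
    (f : α → ℝ) (i₀ : Fin n) :
    ∑ x, p x * ∑ i, f (x i) = n * ∑ x, p x * f (x i₀) := by
  calc ∑ x, p x * ∑ i, f (x i) = ∑ i, ∑ x, p x * f (x i) := by
        simp_rw [mul_sum]
        exact sum_comm
    _ = n * ∑ x, p x * f (x i₀) := by
        rw [sum_congr rfl fun i _ => sum_mul_apply_eq hp f i i₀, sum_const, card_univ,
          Fintype.card_fin, nsmul_eq_mul]

theorem sum_mul_sum_apply_sq (hp : ∀ (π : Equiv.Perm (Fin n)) x, p (x ∘ π) = p x)
    (f : α → ℝ) {i₀ i₁ : Fin n} (h : i₀ ≠ i₁) :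
    ∑ x, p x * (∑ i, f (x i)) ^ 2 =
      n * (n - 1) * ∑ x, p x * (f (x i₀) * f (x i₁)) + n * ∑ x, p x * f (x i₀) ^ 2 := by
  set D := ∑ x, p x * f (x i₀) ^ 2
  set O := ∑ x, p x * (f (x i₀) * f (x i₁))
  have hterm : ∀ i j, ∑ x, p x * (f (x i) * f (x j)) = O + if i = j then D - O else 0 := by
    intro i j
    split_ifs with hij
    · subst hij
      simp_rw [← sq]
      rw [sum_mul_apply_eq hp (f · ^ 2) i i₀]
      ring
    · rw [add_zero, sum_mul_apply_mul_apply_eq hp f f hij h]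
  calc ∑ x, p x * (∑ i, f (x i)) ^ 2 = ∑ i, ∑ j, ∑ x, p x * (f (x i) * f (x j)) := by
        simp_rw [sq, sum_mul_sum, mul_sum]
        rw [sum_comm]
        exact sum_congr rfl fun _ _ => sum_comm
    _ = n * (n - 1) * O + n * D := by
        simp only [hterm, sum_add_distrib, sum_const, sum_ite_eq, mem_univ, if_true, card_univ,
          Fintype.card_fin, nsmul_eq_mul]
        ring

end Exchangeable

/-- The paper's `P⁽ᵏ⁾(x)`: the mass of the cylinder on which the first `k` coordinates
agree with `x`. -/
def marginal {α : Type*} [Fintype α] [DecidableEq α] {n k : ℕ} (p : (Fin n → α) → ℝ)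
    (x : Fin k → α) : ℝ :=
  ∑ y ∈ univ.filter (fun y : Fin n → α => ∀ i : Fin n, (h : (i : ℕ) < k) → y i = x ⟨i, h⟩), p y

theorem marginal_eq_sum_mul_prod {α : Type*} [Fintype α] [DecidableEq α] {n k : ℕ} (hk : k ≤ n)
    (p : (Fin n → α) → ℝ) (x : Fin k → α) :
    marginal p x = ∑ y, p y * ∏ r : Fin k, if y (Fin.castLE hk r) = x r then 1 else 0 := by
  rw [marginal, sum_filter]
  refine sum_congr rfl fun y _ => ?_
  simp only [Fintype.prod_boole, mul_ite, mul_one, mul_zero]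
  exact if_congr ⟨fun H r => H (Fin.castLE hk r) r.2, fun H i hi => H ⟨i, hi⟩⟩ rfl rfl

theorem cast_countOnes {n : ℕ} (x : Fin n → Bool) :
    (countOnes x : ℝ) = ∑ i, if x i then 1 else 0 := by
  simp [countOnes]

theorem countOnes_le {n : ℕ} (x : Fin n → Bool) : countOnes x ≤ n := by
  simpa [countOnes, sum_boole] using card_filter_le univ fun i => x i = true

theorem cast_countOnes_div_mem_Icc {n : ℕ} (x : Fin n → Bool) :
    (countOnes x : ℝ) / n ∈ Set.Icc (0 : ℝ) 1 :=
  ⟨by positivity, div_le_one_of_le₀ (by exact_mod_cast countOnes_le x) n.cast_nonneg⟩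

theorem sum_mul_countOnes_div_sub_sq {n : ℕ} (hn : 2 ≤ n) {p : (Fin n → Bool) → ℝ}
    (hp : ∀ (π : Equiv.Perm (Fin n)) x, p (x ∘ π) = p x) (hp₁ : ∑ x, p x = 1) (a : ℝ) :
    ∑ x, p x * ((countOnes x : ℝ) / n - a) ^ 2 =
      (1 - 1 / n) * marginal p (fun _ : Fin 2 => true) +
        (1 / n - 2 * a) * marginal p (fun _ : Fin 1 => true) + a ^ 2 := by
  set f : Bool → ℝ := fun b => if b then 1 else 0
  have hN : ∀ x : Fin n → Bool, (countOnes x : ℝ) = ∑ i, f (x i) := cast_countOnes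
  have hf : ∀ b, f b ^ 2 = f b := by simp [f]
  let i₀ : Fin n := ⟨0, by omega⟩
  let i₁ : Fin n := ⟨1, by omega⟩
  have hM₁ : marginal p (fun _ : Fin 1 => true) = ∑ x, p x * f (x i₀) := by
    simp only [marginal_eq_sum_mul_prod (show 1 ≤ n by omega), Fin.prod_univ_one]
    rfl
  have hM₂ : marginal p (fun _ : Fin 2 => true) = ∑ x, p x * (f (x i₀) * f (x i₁)) := by
    simp only [marginal_eq_sum_mul_prod hn, Fin.prod_univ_two]
    rfl
  have h₁ := sum_mul_sum_apply hp f i₀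
  have h₂ := sum_mul_sum_apply_sq hp f (show i₀ ≠ i₁ by simp [i₀, i₁, Fin.ext_iff])
  simp only [hf] at h₂
  have hn₀ : (n : ℝ) ≠ 0 := by positivity
  calc ∑ x, p x * ((countOnes x : ℝ) / n - a) ^ 2
      = (∑ x, p x * (∑ i, f (x i)) ^ 2) / n ^ 2 - 2 * a / n * ∑ x, p x * ∑ i, f (x i)
          + a ^ 2 * ∑ x, p x := by
        rw [sum_div, mul_sum, mul_sum, ← sum_sub_distrib, ← sum_add_distrib]
        refine sum_congr rfl fun x _ => ?_
        rw [hN]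
        field_simp
        ring
    _ = _ := by
        rw [h₁, h₂, hp₁, hM₁, hM₂]
        field_simp
        ring

/-- Law of large numbers for chaotic sequences: if symmetric probability measures
`P_n` on `{0,1}^n` are `P`-chaotic (all finite-dimensional marginals converge to
products), then the empirical frequency `N(x)/n` converges in distribution under
`P_n` to the point mass at `P(1)`: `E_{P_n}[G(N/n)] → G(P(1))` for every continuous
`G : [0,1] → ℝ`. -/
theorem stmt_16 (p : (n : ℕ) → (Fin n → Bool) → ℝ) (P : Bool → ℝ)
    (hnonneg : ∀ n x, 0 ≤ p n x)
    (hsum : ∀ n, ∑ x : Fin n → Bool, p n x = 1)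
    (hsym : ∀ n (π : Equiv.Perm (Fin n)) (x : Fin n → Bool), p n (x ∘ π) = p n x)
    (hPnonneg : ∀ b, 0 ≤ P b) (hPsum : P false + P true = 1)
    (hmarg : ∀ (k : ℕ) (x : Fin k → Bool),
      Tendsto (fun n => ∑ y ∈ univ.filter
            (fun y : Fin n → Bool => ∀ i : Fin n, (h : (i : ℕ) < k) → y i = x ⟨i, h⟩),
          p n y)
        atTop (𝓝 (∏ r : Fin k, P (x r))))
    (G : ℝ → ℝ) (hG : ContinuousOn G (Set.Icc (0 : ℝ) 1)) :
    Tendsto (fun n => ∑ x : Fin n → Bool, p n x * G ((countOnes x : ℝ) / n))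
      atTop (𝓝 (G (P true))) := by
  set a := P true
  have ha : a ∈ Set.Icc (0 : ℝ) 1 := ⟨hPnonneg true, by linarith [hPnonneg false]⟩
  refine tendsto_sum_mul_comp_of_tendsto_sum_mul_sub_sq hnonneg hsum isCompact_Icc hG ha
    (fun n => cast_countOnes_div_mem_Icc) ?_
  have hM₁ : Tendsto (fun n => marginal (p n) fun _ : Fin 1 => true) atTop
      (𝓝 (∏ _ : Fin 1, a)) := hmarg 1 fun _ => true
  have hM₂ : Tendsto (fun n => marginal (p n) fun _ : Fin 2 => true) atTop
      (𝓝 (∏ _ : Fin 2, a)) := hmarg 2 fun _ => true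
  rw [Fin.prod_univ_one] at hM₁
  rw [Fin.prod_univ_two] at hM₂
  have hinv : Tendsto (fun n : ℕ => 1 / (n : ℝ)) atTop (𝓝 0) := tendsto_one_div_atTop_nhds_zero_nat
  have hlim := ((((tendsto_const_nhds (x := (1 : ℝ))).sub hinv).mul hM₂).add
    ((hinv.sub (tendsto_const_nhds (x := 2 * a))).mul hM₁)).add (tendsto_const_nhds (x := a ^ 2))
  rw [show (1 - 0) * (a * a) + (0 - 2 * a) * a + a ^ 2 = 0 by ring] at hlim
  refine hlim.congr' ?_
  filter_upwards [eventually_ge_atTop 2] with n hn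
  exact (sum_mul_countOnes_div_sub_sq hn (hsym n) (hsum n) a).symm
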